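/- arXiv:2405.06824 — 6 statements merged into one kernel-verified Lean document; each statement's English description precedes it below -/
import Mathlib

section
/- Let h : X → ℝ be convex and differentiable with L-Lipschitz gradient, let K : X → Y be a bounded linear operator with ‖K‖ ≤ L_K, and set L̂ := max{L, L_K}. Let α > 0, δ ∈ (0,1], β > 0, M ∈ S_α(X), and let σ > 0 satisfy σ ≤ (−1 + √(1 + 4δα/β))/(2L̂), and set τ := βσ. Then for all x, x' ∈ X: τσ‖Kx' − Kx‖² + 2τ( h(x') − h(x) − ⟨∇h(x), x' − x⟩ ) ≤ δ‖x' − x‖²_M. In particular, the line-search (breaking) condition of Algorithm 1 is satisfied for every sufficiently small step size, so the line search terminates after finitely many trials. -/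
/-!
By the descent lemma, an `L̂`-Lipschitz gradient bounds the Bregman distance
`h x' - h x - ⟪∇h x, x' - x⟫` by `L̂/2 ‖x' - x‖²`, and `‖K (x' - x)‖ ≤ L̂ ‖x' - x‖`. So the left-hand
side is at most `β ((σL̂)² + σL̂) ‖x' - x‖²`. The step-size bound says exactly that `σL̂` lies below
the positive root `(-1 + √(1 + 4δα/β)) / 2` of `β (s² + s) = δα`, so this is at most
`δα ‖x' - x‖² ≤ δ ‖x' - x‖²_M`.
-/

open scoped RealInnerProductSpace

theorem sub_sub_fderiv_le_of_lipschitz_fderiv {E : Type*} [NormedAddCommGroup E] [NormedSpace ℝ E]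
    {f : E → ℝ} {f' : E → E →L[ℝ] ℝ} {C : ℝ}
    (hf : ∀ z, HasFDerivAt f (f' z) z) (hLip : ∀ u v, ‖f' u - f' v‖ ≤ C * ‖u - v‖) (x y : E) :
    f y - f x - f' x (y - x) ≤ C / 2 * ‖y - x‖ ^ 2 := by
  set d := y - x
  -- `g` is antitone on `[0, 1]`; comparing its endpoints is the claim.
  set g : ℝ → ℝ := fun t => f (x + t • d) - t * f' x d - C / 2 * ‖d‖ ^ 2 * t ^ 2
  have hline : ∀ t : ℝ, HasDerivAt (fun s : ℝ => x + s • d) d t := fun t => by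
    simpa using ((hasDerivAt_id t).smul_const d).const_add x
  have hg : ∀ t : ℝ, HasDerivAt g (f' (x + t • d) d - f' x d - C * t * ‖d‖ ^ 2) t := fun t => by
    have hfd : HasDerivAt (fun s : ℝ => f (x + s • d)) (f' (x + t • d) d) t :=
      (hf _).comp_hasDerivAt t (hline t)
    have hlin : HasDerivAt (fun s : ℝ => s * f' x d) (f' x d) t := by
      simpa using (hasDerivAt_id t).mul_const (f' x d)
    have hquad : HasDerivAt (fun s : ℝ => C / 2 * ‖d‖ ^ 2 * s ^ 2) (C * t * ‖d‖ ^ 2) t :=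
      ((hasDerivAt_pow 2 t).const_mul _).congr_deriv (by push_cast; ring)
    exact (hfd.sub hlin).sub hquad
  have hg' : ∀ t ∈ Set.Ioo (0 : ℝ) 1, f' (x + t • d) d - f' x d - C * t * ‖d‖ ^ 2 ≤ 0 := by
    rintro t ⟨ht, -⟩
    have : f' (x + t • d) d - f' x d ≤ C * t * ‖d‖ ^ 2 :=
      calc f' (x + t • d) d - f' x d = (f' (x + t • d) - f' x) d := rfl
        _ ≤ ‖f' (x + t • d) - f' x‖ * ‖d‖ := (le_abs_self _).trans ((f' _ - f' x).le_opNorm d)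
        _ ≤ C * ‖t • d‖ * ‖d‖ := by
          gcongr
          simpa using hLip (x + t • d) x
        _ = C * t * ‖d‖ ^ 2 := by rw [norm_smul, Real.norm_of_nonneg ht.le]; ring
    linarith
  have hanti : AntitoneOn g (Set.Icc 0 1) :=
    antitoneOn_of_hasDerivWithinAt_nonpos (convex_Icc 0 1)
      (fun t _ => (hg t).continuousAt.continuousWithinAt)
      (fun t _ => (hg t).hasDerivWithinAt) (by simpa only [interior_Icc] using hg')
  have := hanti (by norm_num : (0 : ℝ) ∈ Set.Icc 0 1) (by norm_num) zero_le_one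
  simp only [g, zero_smul, add_zero, one_smul, add_sub_cancel, d] at this
  linarith

theorem sub_sub_inner_le_of_lipschitz_gradient {E : Type*} [NormedAddCommGroup E]
    [InnerProductSpace ℝ E] [CompleteSpace E] {f : E → ℝ} {f' : E → E} {C : ℝ}
    (hf : ∀ z, HasGradientAt f (f' z) z) (hLip : ∀ u v, ‖f' u - f' v‖ ≤ C * ‖u - v‖) (x y : E) :
    f y - f x - ⟪f' x, y - x⟫ ≤ C / 2 * ‖y - x‖ ^ 2 :=
  sub_sub_fderiv_le_of_lipschitz_fderiv (fun z => hasGradientAt_iff_hasFDerivAt.mp (hf z))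
    (fun u v => by simpa only [← map_sub, LinearIsometryEquiv.norm_map] using hLip u v) x y

theorem mul_sq_add_le_of_le_div_two_mul {β c σ L : ℝ} (hβ : 0 < β) (hσ : 0 < σ) (hL : 0 ≤ L)
    (hσle : σ ≤ (-1 + √(1 + 4 * c / β)) / (2 * L)) :
    β * ((σ * L) ^ 2 + σ * L) ≤ c := by
  obtain rfl | hL := hL.eq_or_lt
  · simp only [mul_zero, div_zero] at hσle
    linarith
  have hroot : 2 * (σ * L) + 1 ≤ √(1 + 4 * c / β) := by
    rw [le_div_iff₀ (by positivity)] at hσle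
    linarith
  rw [Real.le_sqrt' (by positivity)] at hroot
  have : (σ * L) ^ 2 + σ * L ≤ c / β := by linear_combination hroot / 4
  rwa [le_div_iff₀ hβ, mul_comm] at this

theorem lineSearchCondition_of_small_step_general
    {X Y : Type*} [NormedAddCommGroup X] [InnerProductSpace ℝ X] [FiniteDimensional ℝ X]
    [NormedAddCommGroup Y] [InnerProductSpace ℝ Y]
    (h : X → ℝ) (h' : X → X) (L : ℝ)
    (hgrad : ∀ z : X, HasGradientAt h (h' z) z)
    (hLip : ∀ u v : X, ‖h' u - h' v‖ ≤ L * ‖u - v‖)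
    (K : X →L[ℝ] Y) (LK : ℝ) (hK : ‖K‖ ≤ LK)
    (α δ β : ℝ) (hδ : δ ∈ Set.Ioc (0 : ℝ) 1) (hβ : 0 < β)
    (M : X →L[ℝ] X)
    (hMα : ∀ z : X, α * ‖z‖ ^ 2 ≤ ⟪M z, z⟫)
    (σ τ : ℝ) (hσ : 0 < σ)
    (hσle : σ ≤ (-1 + Real.sqrt (1 + 4 * δ * α / β)) / (2 * max L LK))
    (hτ : τ = β * σ) :
    ∀ x x' : X,
      τ * σ * ‖K x' - K x‖ ^ 2
          + 2 * τ * (h x' - h x - ⟪h' x, x' - x⟫)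
        ≤ δ * ⟪M (x' - x), x' - x⟫ := by
  intro x x'
  set Lh := max L LK
  have hLh : 0 ≤ Lh := (norm_nonneg K).trans (hK.trans (le_max_right L LK))
  have hKd : ‖K x' - K x‖ ≤ Lh * ‖x' - x‖ := by
    rw [← map_sub]
    exact K.le_of_opNorm_le (hK.trans (le_max_right L LK)) _
  have hdesc : h x' - h x - ⟪h' x, x' - x⟫ ≤ Lh / 2 * ‖x' - x‖ ^ 2 :=
    sub_sub_inner_le_of_lipschitz_gradient hgrad
      (fun u v => (hLip u v).trans (by gcongr; exact le_max_left L LK)) x x'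
  have hstep : β * ((σ * Lh) ^ 2 + σ * Lh) ≤ δ * α :=
    mul_sq_add_le_of_le_div_two_mul hβ hσ hLh (by rwa [← mul_assoc])
  subst hτ
  calc β * σ * σ * ‖K x' - K x‖ ^ 2 + 2 * (β * σ) * (h x' - h x - ⟪h' x, x' - x⟫)
      ≤ β * σ * σ * (Lh * ‖x' - x‖) ^ 2 + 2 * (β * σ) * (Lh / 2 * ‖x' - x‖ ^ 2) := by
        gcongr
    _ = β * ((σ * Lh) ^ 2 + σ * Lh) * ‖x' - x‖ ^ 2 := by ring
    _ ≤ δ * α * ‖x' - x‖ ^ 2 := by gcongr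
    _ ≤ δ * ⟪M (x' - x), x' - x⟫ := by
        rw [mul_assoc]
        exact mul_le_mul_of_nonneg_left (hMα _) hδ.1.le

/-- If `h` is convex with `L`-Lipschitz gradient, `‖K‖ ≤ L_K`,
`L̂ = max{L, L_K}`, `M ∈ S_α(X)`, `δ ∈ (0,1]`, `β > 0`, `0 < σ ≤ (−1+√(1+4δα/β))/(2L̂)`
and `τ = βσ`, then the line-search (breaking) condition of Algorithm 1 holds for all
`x, x'`. -/
theorem lineSearchCondition_of_small_step
    {X Y : Type*} [NormedAddCommGroup X] [InnerProductSpace ℝ X] [FiniteDimensional ℝ X]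
    [NormedAddCommGroup Y] [InnerProductSpace ℝ Y] [FiniteDimensional ℝ Y]
    (h : X → ℝ) (h' : X → X) (L : ℝ)
    (hconv : ConvexOn ℝ Set.univ h)
    (hgrad : ∀ z : X, HasGradientAt h (h' z) z)
    (hLip : ∀ u v : X, ‖h' u - h' v‖ ≤ L * ‖u - v‖)
    (K : X →L[ℝ] Y) (LK : ℝ) (hK : ‖K‖ ≤ LK)
    (α δ β : ℝ) (hα : 0 < α) (hδ : δ ∈ Set.Ioc (0 : ℝ) 1) (hβ : 0 < β)
    (M : X →L[ℝ] X)
    (hMsa : ∀ u v : X, ⟪M u, v⟫ = ⟪u, M v⟫)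
    (hMα : ∀ z : X, α * ‖z‖ ^ 2 ≤ ⟪M z, z⟫)
    (σ τ : ℝ) (hσ : 0 < σ)
    (hσle : σ ≤ (-1 + Real.sqrt (1 + 4 * δ * α / β)) / (2 * max L LK))
    (hτ : τ = β * σ) :
    ∀ x x' : X,
      τ * σ * ‖K x' - K x‖ ^ 2
          + 2 * τ * (h x' - h x - ⟪h' x, x' - x⟫)
        ≤ δ * ⟪M (x' - x), x' - x⟫ :=
  lineSearchCondition_of_small_step_general h h' L hgrad hLip K LK hK α δ β hδ hβ M hMα σ τ hσ hσle
    hτ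
end

section
/- Let δ ∈ (0,1), α > 0, μ ∈ (0,1), L̂ > 0, and let (β_k)_{k≥0} be a positive non-increasing sequence with β_k ≤ β for all k. Define σ̲_k := (−1 + √(1 + 4δα/β_k))/(2L̂) and σ̲ := (−1 + √(1 + 4δα/β))/(2L̂). Let (σ_k)_{k≥0} be positive numbers such that σ_0 > μσ̲_0 and, for every k ≥ 1, either (a) σ_k = σ̄_k for some σ̄_k ≥ (β_{k−1}/β_k)σ_{k−1}, or (b) σ_k = μσ'_k for some σ'_k > σ̲_k (the last rejected backtracking trial). Then σ_k > μσ̲ > 0 for all k; in particular, the step sizes produced by the line search of Algorithm 1 are bounded below by a positive constant. -/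
/-- Lower bound for the step sizes produced by the backtracking
line search of Algorithm 1: with `σ̲_k := (−1+√(1+4δα/β_k))/(2L̂)` and
`σ̲ := (−1+√(1+4δα/β))/(2L̂)`, if `σ_0 > μσ̲_0` and each `σ_k` is either the accepted
initial trial (`σ_k ≥ (β_{k−1}/β_k)σ_{k−1}`) or `μ` times a rejected trial
(`σ_k = μσ'` with `σ' > σ̲_k`), then `σ_k > μσ̲ > 0` for all `k`. -/
theorem stepSizes_bounded_below
    (δ α μ Lhat βmax : ℝ)
    (hδ : δ ∈ Set.Ioo (0 : ℝ) 1) (hα : 0 < α) (hμ : μ ∈ Set.Ioo (0 : ℝ) 1)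
    (hL : 0 < Lhat)
    (β : ℕ → ℝ) (hβpos : ∀ k, 0 < β k) (hβmono : ∀ k, β (k + 1) ≤ β k)
    (hβle : ∀ k, β k ≤ βmax)
    (σ : ℕ → ℝ) (hσpos : ∀ k, 0 < σ k)
    (hσ0 : σ 0 > μ * ((-1 + Real.sqrt (1 + 4 * δ * α / β 0)) / (2 * Lhat)))
    (hstep : ∀ k, 1 ≤ k →
      σ k ≥ (β (k - 1) / β k) * σ (k - 1) ∨
      ∃ σ' : ℝ, σ k = μ * σ' ∧
        σ' > (-1 + Real.sqrt (1 + 4 * δ * α / β k)) / (2 * Lhat)) :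
    ∀ k, σ k > μ * ((-1 + Real.sqrt (1 + 4 * δ * α / βmax)) / (2 * Lhat)) ∧
      0 < μ * ((-1 + Real.sqrt (1 + 4 * δ * α / βmax)) / (2 * Lhat)) := by
  obtain ⟨hδ0, hδ1⟩ := hδ
  obtain ⟨hμ0, hμ1⟩ := hμ
  have hβmax : 0 < βmax := lt_of_lt_of_le (hβpos 0) (hβle 0)
  set umax : ℝ := (-1 + Real.sqrt (1 + 4 * δ * α / βmax)) / (2 * Lhat) with humax
  have h4 : 0 < 4 * δ * α := by positivity
  -- umax > 0
  have humaxpos : 0 < umax := by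
    have h1 : (1 : ℝ) < 1 + 4 * δ * α / βmax := by
      have : 0 < 4 * δ * α / βmax := by positivity
      linarith
    have hs : 1 < Real.sqrt (1 + 4 * δ * α / βmax) := by
      have := (Real.lt_sqrt (x := 1) (y := 1 + 4 * δ * α / βmax) (by positivity)).2
      exact this (by nlinarith)
    have : 0 < -1 + Real.sqrt (1 + 4 * δ * α / βmax) := by linarith
    exact div_pos this (by positivity)
  have hmu_umax : 0 < μ * umax := mul_pos hμ0 humaxpos
  -- umax ≤ underline k for each k
  have hle : ∀ k, umax ≤ (-1 + Real.sqrt (1 + 4 * δ * α / β k)) / (2 * Lhat) := by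
    intro k
    have hdiv : 4 * δ * α / βmax ≤ 4 * δ * α / β k :=
      div_le_div_of_nonneg_left (le_of_lt h4) (hβpos k) (hβle k)
    have hs : Real.sqrt (1 + 4 * δ * α / βmax) ≤ Real.sqrt (1 + 4 * δ * α / β k) :=
      Real.sqrt_le_sqrt (by linarith)
    exact div_le_div_of_nonneg_right (by linarith) (by positivity)
  intro k
  refine ⟨?_, hmu_umax⟩
  induction k with
  | zero =>
    calc μ * umax ≤ μ * ((-1 + Real.sqrt (1 + 4 * δ * α / β 0)) / (2 * Lhat)) := by
          exact mul_le_mul_of_nonneg_left (hle 0) (le_of_lt hμ0)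
      _ < σ 0 := hσ0
  | succ n ih =>
    rcases hstep (n + 1) (Nat.le_add_left 1 n) with h | ⟨σ', hσ', hs'⟩
    · have hβ : β n ≤ β (n + 1 - 1) := by simp
      have hratio : (1 : ℝ) ≤ β n / β (n + 1) := by
        rw [le_div_iff₀ (hβpos (n + 1))]
        simpa using hβmono n
      have : σ n ≤ (β (n + 1 - 1) / β (n + 1)) * σ (n + 1 - 1) := by
        simp only [Nat.add_sub_cancel]
        nlinarith [hσpos n, hratio]
      exact lt_of_lt_of_le ih (this.trans h)
    · rw [hσ']
      have : μ * umax ≤ μ * ((-1 + Real.sqrt (1 + 4 * δ * α / β (n+1))) / (2 * Lhat)) :=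
        mul_le_mul_of_nonneg_left (hle (n+1)) (le_of_lt hμ0)
      exact lt_of_le_of_lt this (by exact mul_lt_mul_of_pos_left hs' hμ0)
end

section
/- Let f* : Y → ℝ ∪ {+∞} be proper, lower semicontinuous and convex, K : X → Y bounded linear, σ_{k−1}, σ_k > 0, θ_k := σ_k/σ_{k−1}. Suppose y^k = prox_{σ_{k−1} f*}( y^{k−1} + σ_{k−1} K x^k ) and set ȳ^k := y^k + θ_k(y^k − y^{k−1}). Then for every y ∈ Y: ⟨ȳ^k − y^k − σ_k K x^k, y − ȳ^k⟩ ≥ σ_k( (1+θ_k) f*(y^k) − θ_k f*(y^{k−1}) − f*(y) ). -/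
/-!
Write `w = y^{k-1} + σ_{k-1} K x^k`. Comparing the prox objective at `y^k` with its values at
`y^k + t (z - y^k)`, using convexity of `f*`, dividing by `t` and letting `t → 0` shows that
`u = (w - y^k) / σ_{k-1}` is a subgradient of `f*` at `y^k`. Since `σ_k = θ_k σ_{k-1}`, the
extrapolation gives `ȳ^k - y^k - σ_k K x^k = -σ_k u`, and the claim is the sum of the subgradient
inequalities at `y` and at `y^{k-1}`, the second one weighted by `θ_k`. When `f*(y)` or
`f*(y^{k-1})` is `+∞` the left-hand side is `-∞`.
-/

open scoped RealInnerProductSpace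

/-- Convexity for extended-real-valued functions. -/
def ERealConvexOn {X : Type*} [AddCommGroup X] [Module ℝ X] (g : X → EReal) : Prop :=
  ∀ ⦃u v : X⦄ ⦃a b : ℝ⦄, 0 ≤ a → 0 ≤ b → a + b = 1 →
    g (a • u + b • v) ≤ (a : EReal) * g u + (b : EReal) * g v

open Filter Set Topology

lemma nonneg_of_forall_mem_Ioc_nonneg_add_mul {c d : ℝ}
    (h : ∀ t ∈ Ioc (0 : ℝ) 1, 0 ≤ c + t * d) : 0 ≤ c := by
  have hlim : Tendsto (fun t : ℝ => c + t * d) (𝓝[>] 0) (𝓝 c) := by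
    have hcont : Continuous fun t : ℝ => c + t * d := by fun_prop
    exact (hcont.tendsto' 0 c (by simp)).mono_left nhdsWithin_le_nhds
  exact ge_of_tendsto hlim (eventually_of_mem (Ioc_mem_nhdsGT one_pos) h)

section

variable {Y : Type*} [NormedAddCommGroup Y] [InnerProductSpace ℝ Y]

lemma ERealConvexOn.prox_le_along_segment {g : Y → EReal} (hg : ERealConvexOn g)
    {σ : ℝ} {w p z : Y} {a b t : ℝ}
    (hp : ∀ v : Y, g p + ((1 / (2 * σ) * ‖p - w‖ ^ 2 : ℝ) : EReal)
        ≤ g v + ((1 / (2 * σ) * ‖v - w‖ ^ 2 : ℝ) : EReal))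
    (ha : g p = a) (hb : g z = b) (ht₀ : 0 ≤ t) (ht₁ : t ≤ 1) :
    a + 1 / (2 * σ) * ‖p - w‖ ^ 2
      ≤ t * b + (1 - t) * a + 1 / (2 * σ) * ‖p + t • (z - p) - w‖ ^ 2 := by
  have hseg : p + t • (z - p) = t • z + (1 - t) • p := by module
  have hconv := hg ht₀ (sub_nonneg.2 ht₁) (add_sub_cancel t 1) (u := z) (v := p)
  rw [ha, hb] at hconv
  have hmin := hp (t • z + (1 - t) • p)
  rw [ha] at hmin
  rw [hseg, ← EReal.coe_le_coe_iff]
  push_cast at hconv hmin ⊢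
  exact hmin.trans (by gcongr)

lemma norm_add_smul_sub_sq (p w v : Y) (t : ℝ) :
    ‖p + t • v - w‖ ^ 2 = ‖p - w‖ ^ 2 - 2 * t * ⟪w - p, v⟫ + t ^ 2 * ‖v‖ ^ 2 := by
  rw [show p + t • v - w = (p - w) + t • v by abel, norm_add_sq_real, real_inner_smul_right,
    norm_smul, mul_pow, Real.norm_eq_abs, sq_abs, ← neg_sub w p, inner_neg_left]
  ring

/-- `σ⁻¹ • (w - p)` is a subgradient of `g` at the proximal point `p` of `w`. -/
lemma ERealConvexOn.inner_le_of_prox {g : Y → EReal} (hg : ERealConvexOn g)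
    {σ : ℝ} (hσ : 0 < σ) {w p z : Y} {a b : ℝ}
    (hp : ∀ v : Y, g p + ((1 / (2 * σ) * ‖p - w‖ ^ 2 : ℝ) : EReal)
        ≤ g v + ((1 / (2 * σ) * ‖v - w‖ ^ 2 : ℝ) : EReal))
    (ha : g p = a) (hb : g z = b) :
    a + ⟪σ⁻¹ • (w - p), z - p⟫ ≤ b := by
  rw [← sub_nonneg, sub_add_eq_sub_sub]
  refine nonneg_of_forall_mem_Ioc_nonneg_add_mul (d := ‖z - p‖ ^ 2 / (2 * σ)) fun t ht => ?_
  have hseg := hg.prox_le_along_segment hp ha hb ht.1.le ht.2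
  rw [norm_add_smul_sub_sq] at hseg
  have hdiff : t * (b - a - ⟪σ⁻¹ • (w - p), z - p⟫ + t * (‖z - p‖ ^ 2 / (2 * σ)))
      = t * b + (1 - t) * a + 1 / (2 * σ) * (‖p - w‖ ^ 2 - 2 * t * ⟪w - p, z - p⟫
          + t ^ 2 * ‖z - p‖ ^ 2) - (a + 1 / (2 * σ) * ‖p - w‖ ^ 2) := by
    rw [real_inner_smul_left]
    field_simp
    ring
  exact (mul_nonneg_iff_of_pos_left ht.1).1 (hdiff ▸ sub_nonneg.2 hseg)

lemma neg_smul_inner_extrapolate_ge {u p q y : Y} {a b c θ σ : ℝ} (hθ : 0 ≤ θ) (hσ : 0 ≤ σ)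
    (hq : a + ⟪u, q - p⟫ ≤ b) (hy : a + ⟪u, y - p⟫ ≤ c) :
    σ * ((1 + θ) * a - θ * b - c) ≤ ⟪-(σ • u), y - (p + θ • (p - q))⟫ := by
  have hexp : ⟪-(σ • u), y - (p + θ • (p - q))⟫ = -σ * (⟪u, y - p⟫ + θ * ⟪u, q - p⟫) := by
    rw [show y - (p + θ • (p - q)) = (y - p) + θ • (q - p) by module, inner_neg_left,
      real_inner_smul_left, inner_add_right, real_inner_smul_right]
    ring
  have hsum : (1 + θ) * a + (⟪u, y - p⟫ + θ * ⟪u, q - p⟫) ≤ c + θ * b := by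
    nlinarith [mul_le_mul_of_nonneg_left hq hθ]
  rw [hexp]
  nlinarith [mul_le_mul_of_nonneg_left hsum hσ]

end

theorem extrapolated_dual_prox_inequality_general
    {X Y : Type*} [NormedAddCommGroup X] [InnerProductSpace ℝ X]
    [NormedAddCommGroup Y] [InnerProductSpace ℝ Y]
    (K : X →L[ℝ] Y)
    (fs : Y → EReal)
    (hfbot : ∀ z : Y, fs z ≠ ⊥)
    (hfconv : ERealConvexOn fs)
    (σkm1 σk θk : ℝ) (hσkm1 : 0 < σkm1) (hσk : 0 < σk) (hθk : θk = σk / σkm1)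
    (xk : X) (ykm1 yk ybk : Y)
    (hyk : ∀ z : Y,
      fs yk + ((1 / (2 * σkm1) * ‖yk - (ykm1 + σkm1 • K xk)‖ ^ 2 : ℝ) : EReal)
        ≤ fs z + ((1 / (2 * σkm1) * ‖z - (ykm1 + σkm1 • K xk)‖ ^ 2 : ℝ) : EReal))
    (hybk : ybk = yk + θk • (yk - ykm1)) :
    ∀ y : Y,
      (σk : EReal) * (((1 + θk : ℝ) : EReal) * fs yk - ((θk : ℝ) : EReal) * fs ykm1 - fs y)
        ≤ ((⟪ybk - yk - σk • K xk, y - ybk⟫ : ℝ) : EReal) := by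
  intro y
  have hθ : 0 < θk := hθk ▸ div_pos hσk hσkm1
  have hσ : σk = θk * σkm1 := by rw [hθk, div_mul_cancel₀ _ hσkm1.ne']
  by_cases hy : fs y = ⊤
  · simp [hy, EReal.mul_bot_of_pos (EReal.coe_pos.2 hσk)]
  by_cases hq : fs ykm1 = ⊤
  · simp [hq, EReal.coe_mul_top_of_pos hθ, EReal.mul_bot_of_pos (EReal.coe_pos.2 hσk)]
  obtain ⟨c, hc⟩ : ∃ c : ℝ, fs y = c := ⟨_, (EReal.coe_toReal hy (hfbot y)).symm⟩
  obtain ⟨b, hb⟩ : ∃ b : ℝ, fs ykm1 = b := ⟨_, (EReal.coe_toReal hq (hfbot ykm1)).symm⟩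
  have hp : fs yk ≠ ⊤ := by
    intro h
    have := hyk y
    rw [h, hc, EReal.top_add_coe, ← EReal.coe_add, top_le_iff] at this
    exact EReal.coe_ne_top _ this
  obtain ⟨a, ha⟩ : ∃ a : ℝ, fs yk = a := ⟨_, (EReal.coe_toReal hp (hfbot yk)).symm⟩
  have hdir : ybk - yk - σk • K xk = -(σk • σkm1⁻¹ • (ykm1 + σkm1 • K xk - yk)) := by
    rw [hybk, hσ, smul_smul, mul_assoc, mul_inv_cancel₀ hσkm1.ne']
    module
  rw [ha, hb, hc, hdir, hybk]
  exact_mod_cast neg_smul_inner_extrapolate_ge hθ.le hσk.le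
    (hfconv.inner_le_of_prox hσkm1 hyk ha hb) (hfconv.inner_le_of_prox hσkm1 hyk ha hc)

/-- If `y^k = prox_{σ_{k−1} f*}(y^{k−1} + σ_{k−1}Kx^k)` and
`ȳ^k = y^k + θ_k(y^k − y^{k−1})` with `θ_k = σ_k/σ_{k−1}`, then for every `y`:
`⟨ȳ^k − y^k − σ_k Kx^k, y − ȳ^k⟩ ≥ σ_k((1+θ_k)f*(y^k) − θ_k f*(y^{k−1}) − f*(y))`. -/
theorem extrapolated_dual_prox_inequality
    {X Y : Type*} [NormedAddCommGroup X] [InnerProductSpace ℝ X] [FiniteDimensional ℝ X]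
    [NormedAddCommGroup Y] [InnerProductSpace ℝ Y] [FiniteDimensional ℝ Y]
    (K : X →L[ℝ] Y)
    (fs : Y → EReal)
    (hfbot : ∀ z : Y, fs z ≠ ⊥) (hftop : ∃ z : Y, fs z ≠ ⊤)
    (hflsc : LowerSemicontinuous fs) (hfconv : ERealConvexOn fs)
    (σkm1 σk θk : ℝ) (hσkm1 : 0 < σkm1) (hσk : 0 < σk) (hθk : θk = σk / σkm1)
    (xk : X) (ykm1 yk ybk : Y)
    (hyk : ∀ z : Y,
      fs yk + ((1 / (2 * σkm1) * ‖yk - (ykm1 + σkm1 • K xk)‖ ^ 2 : ℝ) : EReal)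
        ≤ fs z + ((1 / (2 * σkm1) * ‖z - (ykm1 + σkm1 • K xk)‖ ^ 2 : ℝ) : EReal))
    (hybk : ybk = yk + θk • (yk - ykm1)) :
    ∀ y : Y,
      (σk : EReal) * (((1 + θk : ℝ) : EReal) * fs yk - ((θk : ℝ) : EReal) * fs ykm1 - fs y)
        ≤ ((⟪ybk - yk - σk • K xk, y - ybk⟫ : ℝ) : EReal) :=
  extrapolated_dual_prox_inequality_general K fs hfbot hfconv σkm1 σk θk hσkm1 hσk hθk xk ykm1 yk
    ybk hyk hybk
end

section
/- Consider one iteration of Algorithm 1 with constant ratio β_k ≡ β > 0 and δ ∈ (0,1]: given x^k ∈ X, y^{k−1}, and σ_{k−1} > 0, suppose y^k = prox_{σ_{k−1} f*}(y^{k−1} + σ_{k−1}Kx^k), θ_k = σ_k/σ_{k−1} with σ_k > 0, τ_k = βσ_k, ȳ^k = y^k + θ_k(y^k − y^{k−1}), x^{k+1} = prox^{M_k}_{τ_k g}( x^k − τ_k M_k^{−1}K*ȳ^k − τ_k M_k^{−1}∇h(x^k) ) with M_k ∈ S_α(X), y^{k+1} = prox_{σ_k f*}(y^k + σ_k K x^{k+1}),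 and the line-search condition τ_kσ_k‖Kx^{k+1} − Kx^k‖² + 2τ_k( h(x^{k+1}) − h(x^k) − ⟨∇h(x^k), x^{k+1} − x^k⟩ ) ≤ δ‖x^{k+1} − x^k‖²_{M_k} holds. Then for any saddle point (x̂, ŷ): ½‖y^k − ŷ‖² + (1/(2β))‖x^k − x̂‖²_{M_k} − ((1−δ)/(2β))‖x^{k+1} − x^k‖²_{M_k} + σ_kθ_k D_{x̂,ŷ}(y^{k−1}) − ½‖ȳ^k − y^k‖² ≥ σ_k( P_{x̂,ŷ}(x^{k+1}) + (1+θ_k)D_{x̂,ŷ}(y^k) ) + ½‖ŷ − y^{k+1}‖² + (1/(2β))‖x̂ − x^{k+1}‖²_{M_k}. -/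
open scoped RealInnerProductSpace

/-- `p = prox^Q_{τg}(w)`: `p` minimizes `z ↦ g(z) + (1/(2τ))‖z − w‖²_Q`. -/
def IsProxPt {E : Type*} [NormedAddCommGroup E] [InnerProductSpace ℝ E]
    (Q : E →L[ℝ] E) (τ : ℝ) (g : E → EReal) (w p : E) : Prop :=
  ∀ z : E,
    g p + ((1 / (2 * τ) * ⟪Q (p - w), p - w⟫ : ℝ) : EReal)
      ≤ g z + ((1 / (2 * τ) * ⟪Q (z - w), z - w⟫ : ℝ) : EReal)

/-- The value `⟨Kx, y⟩ + g(x) + h(x) − f*(y)` of the saddle-point problem. -/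
noncomputable def saddleVal {X Y : Type*}
    [NormedAddCommGroup X] [InnerProductSpace ℝ X]
    [NormedAddCommGroup Y] [InnerProductSpace ℝ Y]
    (K : X →L[ℝ] Y) (g : X → EReal) (h : X → ℝ) (fs : Y → EReal)
    (x : X) (y : Y) : EReal :=
  ((⟪K x, y⟫ : ℝ) : EReal) + g x + ((h x : ℝ) : EReal) - fs y

/-- `(xh, yh)` is a saddle point. -/
def IsSaddlePoint {X Y : Type*}
    [NormedAddCommGroup X] [InnerProductSpace ℝ X]
    [NormedAddCommGroup Y] [InnerProductSpace ℝ Y]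
    (K : X →L[ℝ] Y) (g : X → EReal) (h : X → ℝ) (fs : Y → EReal)
    (xh : X) (yh : Y) : Prop :=
  ∀ (x : X) (y : Y),
    saddleVal K g h fs xh y ≤ saddleVal K g h fs xh yh ∧
    saddleVal K g h fs xh yh ≤ saddleVal K g h fs x yh

/-- Primal gap function `P_{xh,yh}`. -/
noncomputable def Pgap {X Y : Type*}
    [NormedAddCommGroup X] [InnerProductSpace ℝ X] [FiniteDimensional ℝ X]
    [NormedAddCommGroup Y] [InnerProductSpace ℝ Y] [FiniteDimensional ℝ Y]
    (K : X →L[ℝ] Y) (g : X → EReal) (h : X → ℝ) (xh : X) (yh : Y) (x : X) : EReal :=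
  g x + ((h x : ℝ) : EReal) - g xh - ((h xh : ℝ) : EReal)
    + ((⟪(ContinuousLinearMap.adjoint K) yh, x - xh⟫ : ℝ) : EReal)

/-- Dual gap function `D_{xh,yh}`. -/
noncomputable def Dgap {X Y : Type*}
    [NormedAddCommGroup X] [InnerProductSpace ℝ X]
    [NormedAddCommGroup Y] [InnerProductSpace ℝ Y]
    (K : X →L[ℝ] Y) (fs : Y → EReal) (xh : X) (yh : Y) (y : Y) : EReal :=
  fs y - fs yh - ((⟪K xh, y - yh⟫ : ℝ) : EReal)

/-! The three proximal steps yield variational inequalities (proximal optimality in its convex,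
subgradient-free form), and `h` contributes its gradient inequality. The three-point identity
`2⟪a - b, b - c⟫ = ‖a - c‖² - ‖a - b‖² - ‖b - c‖²` turns these into differences of squared
distances, and the bilinear coupling terms telescope to `σ⟪y^{k+1} - ȳ^k, K(x^{k+1} - x^k)⟫`,
which Young's inequality and the line-search condition absorb. -/

open Filter Topology Set

theorem le_of_forall_le_add_mul {a b c : ℝ} (H : ∀ t : ℝ, 0 < t → t ≤ 1 → a ≤ b + t * c) :
    a ≤ b := by
  have hlim : Tendsto (fun t : ℝ => b + t * c) (𝓝[>] 0) (𝓝 b) := by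
    have : Tendsto (fun t : ℝ => b + t * c) (𝓝 0) (𝓝 (b + 0 * c)) :=
      (continuous_const.add (continuous_id.mul continuous_const)).tendsto 0
    simpa using this.mono_left nhdsWithin_le_nhds
  refine ge_of_tendsto hlim ?_
  filter_upwards [Ioc_mem_nhdsGT one_pos] with t ht using H t ht.1 ht.2

theorem ConvexOn.inner_le_sub_of_hasGradientAt {E : Type*} [NormedAddCommGroup E]
    [InnerProductSpace ℝ E] [CompleteSpace E] {f : E → ℝ} (hf : ConvexOn ℝ univ f)
    {x f' : E} (hx : HasGradientAt f f' x) (y : E) : ⟪f', y - x⟫ ≤ f y - f x := by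
  let ℓ : ℝ →ᵃ[ℝ] E := AffineMap.lineMap x y
  have hline : ConvexOn ℝ univ (f ∘ ℓ) := hf.comp_affineMap ℓ
  have hderiv : HasDerivAt (f ∘ ℓ) ⟪f', y - x⟫ 0 := by
    have hx0 : HasFDerivAt f (InnerProductSpace.toDual ℝ E f') (ℓ 0) := by
      simpa [ℓ] using hx.hasFDerivAt
    simpa using hx0.comp_hasDerivAt (0 : ℝ) AffineMap.hasDerivAt_lineMap
  simpa [slope, ℓ] using hline.le_slope_of_hasDerivAt (mem_univ 0) (mem_univ 1) one_pos hderiv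

section InnerProduct

variable {E : Type*} [NormedAddCommGroup E] [InnerProductSpace ℝ E]

theorem two_mul_inner_map_sub_sub {Q : E →L[ℝ] E} (hQ : (Q : E →ₗ[ℝ] E).IsSymmetric)
    (a b c : E) :
    2 * ⟪Q (a - b), b - c⟫
      = ⟪Q (a - c), a - c⟫ - ⟪Q (a - b), a - b⟫ - ⟪Q (b - c), b - c⟫ := by
  have hsymm : ⟪Q (b - c), a - b⟫ = ⟪Q (a - b), b - c⟫ := by
    rw [real_inner_comm]; exact (hQ _ _).symm
  rw [show a - c = (a - b) + (b - c) by abel]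
  simp only [map_add, inner_add_left, inner_add_right, hsymm]
  ring

theorem two_mul_inner_sub_sub (a b c : E) :
    2 * ⟪a - b, b - c⟫ = ‖a - c‖ ^ 2 - ‖a - b‖ ^ 2 - ‖b - c‖ ^ 2 := by
  rw [show a - c = (a - b) + (b - c) by abel, norm_add_sq_real]
  ring

theorem mul_inner_sub_half_norm_sq_le (σ : ℝ) (u v : E) :
    σ * ⟪u, v⟫ - ‖u‖ ^ 2 / 2 ≤ σ ^ 2 / 2 * ‖v‖ ^ 2 := by
  have h := norm_sub_sq_real u (σ • v)
  rw [real_inner_smul_right, norm_smul, mul_pow, Real.norm_eq_abs, sq_abs] at h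
  linarith [sq_nonneg ‖u - σ • v‖]

end InnerProduct

namespace IsProxPt

variable {E : Type*} [NormedAddCommGroup E] [InnerProductSpace ℝ E] {Q : E →L[ℝ] E} {τ : ℝ}
  {g : E → EReal} {w p : E}

theorem ne_top (hp : IsProxPt Q τ g w p) {z : E} (hz : g z ≠ ⊤) : g p ≠ ⊤ := by
  intro htop
  have hle := hp z
  rw [htop, EReal.top_add_coe, top_le_iff] at hle
  exact EReal.add_ne_top hz (EReal.coe_ne_top _) hle

theorem mul_sub_le_inner (hp : IsProxPt Q τ g w p) (hQ : (Q : E →ₗ[ℝ] E).IsSymmetric)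
    (hτ : 0 < τ) (hg : ERealConvexOn g) {z : E} {Gp Gz : ℝ} (hgp : g p = Gp) (hgz : g z = Gz) :
    τ * (Gp - Gz) ≤ ⟪Q (z - p), p - w⟫ := by
  set X := ⟪Q (z - p), p - w⟫
  set Y := ⟪Q (z - p), z - p⟫
  -- compare `p` with `p + t • (z - p)` and let `t → 0`
  refine le_of_forall_le_add_mul (c := Y / 2) fun t ht0 ht1 => ?_
  have hconv : g (p + t • (z - p)) ≤ ((1 - t) * Gp + t * Gz : ℝ) := by
    have := hg (u := p) (v := z) (sub_nonneg.2 ht1) ht0.le (by ring)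
    rwa [hgp, hgz, show (1 - t) • p + t • z = p + t • (z - p) by module] at this
  have hquad : ⟪Q (p + t • (z - p) - w), p + t • (z - p) - w⟫
      = ⟪Q (p - w), p - w⟫ + 2 * t * X + t ^ 2 * Y := by
    have hsymm : ⟪Q (p - w), z - p⟫ = X := (hQ _ _).trans (real_inner_comm _ _)
    rw [show p + t • (z - p) - w = (p - w) + t • (z - p) by abel]
    simp only [map_add, map_smul, inner_add_left, inner_add_right, real_inner_smul_left,
      real_inner_smul_right, hsymm]
    ring
  have hmin := (hp (p + t • (z - p))).trans (add_le_add_left hconv _)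
  rw [hgp, hquad] at hmin
  have hreal : t * (Gp - Gz) ≤ 1 / (2 * τ) * (2 * t * X + t ^ 2 * Y) := by
    have : Gp + 1 / (2 * τ) * ⟪Q (p - w), p - w⟫ ≤ (1 - t) * Gp + t * Gz
        + 1 / (2 * τ) * (⟪Q (p - w), p - w⟫ + 2 * t * X + t ^ 2 * Y) := by exact_mod_cast hmin
    linarith
  have hscaled : t * (τ * (Gp - Gz)) ≤ t * (X + t * (Y / 2)) := by
    calc t * (τ * (Gp - Gz)) = τ * (t * (Gp - Gz)) := by ring
      _ ≤ τ * (1 / (2 * τ) * (2 * t * X + t ^ 2 * Y)) := by gcongr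
      _ = t * (X + t * (Y / 2)) := by field_simp
  exact le_of_mul_le_mul_left hscaled ht0

theorem forward_backward_le [CompleteSpace E] {M Minv : E →L[ℝ] E} {β σ : ℝ} {x a d : E}
    (hp : IsProxPt M (β * σ) g (x - (β * σ) • Minv a - (β * σ) • Minv d) p)
    (hM : (M : E →ₗ[ℝ] E).IsSymmetric) (hMinv : M.comp Minv = ContinuousLinearMap.id ℝ E)
    (hβ : 0 < β) (hσ : 0 < σ) (hg : ERealConvexOn g) {h : E → ℝ} (hh : ConvexOn ℝ univ h)
    (hd : HasGradientAt h d x) {z : E} {Gp Gz : ℝ} (hgp : g p = Gp) (hgz : g z = Gz) :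
    σ * (Gp + h p - (Gz + h z))
      ≤ 1 / (2 * β) * (⟪M (x - z), x - z⟫ - ⟪M (z - p), z - p⟫ - ⟪M (p - x), p - x⟫)
        + σ * (⟪a, z - p⟫ + (h p - h x - ⟪d, p - x⟫)) := by
  have hvi := hp.mul_sub_le_inner hM (by positivity) hg hgp hgz
  have hMMinv (v : E) : ⟪M (z - p), Minv v⟫ = ⟪v, z - p⟫ := by
    have hv : M (Minv v) = v := congrArg (· v) hMinv
    exact (hM _ _).trans (by rw [ContinuousLinearMap.coe_coe, hv, real_inner_comm])
  have hsplit : ⟪M (z - p), p - (x - (β * σ) • Minv a - (β * σ) • Minv d)⟫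
      = ⟪M (z - p), p - x⟫ + (β * σ) * ⟪a, z - p⟫ + (β * σ) * ⟪d, z - p⟫ := by
    rw [show p - (x - (β * σ) • Minv a - (β * σ) • Minv d)
        = (p - x) + (β * σ) • Minv a + (β * σ) • Minv d by abel]
    simp only [inner_add_right, real_inner_smul_right, hMMinv]
  have hthree := two_mul_inner_map_sub_sub hM z p x
  have hflip : ⟪M (z - x), z - x⟫ = ⟪M (x - z), x - z⟫ := by
    rw [← neg_sub x z, map_neg, inner_neg_neg]
  have hgr := hh.inner_le_sub_of_hasGradientAt hd z
  have hdsplit : ⟪d, z - p⟫ = ⟪d, z - x⟫ - ⟪d, p - x⟫ := by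
    rw [← inner_sub_right, sub_sub_sub_cancel_right]
  rw [hsplit, hdsplit] at hvi
  rw [hflip] at hthree
  have hτ : β * (σ * (Gp + h p - (Gz + h z)))
      ≤ β * (1 / (2 * β) * (⟪M (x - z), x - z⟫ - ⟪M (z - p), z - p⟫ - ⟪M (p - x), p - x⟫)
        + σ * (⟪a, z - p⟫ + (h p - h x - ⟪d, p - x⟫))) := by
    rw [mul_add, ← mul_assoc β (1 / (2 * β)), show β * (1 / (2 * β)) = 1 / 2 by field_simp]
    linarith [mul_le_mul_of_nonneg_left hgr (by positivity : (0 : ℝ) ≤ β * σ)]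
  exact le_of_mul_le_mul_left hτ hβ

theorem consecutive_steps_le {f : E → EReal} {σ₀ σ θ : ℝ} {y₀ y y₁ ybar yhat u v : E}
    (hy : IsProxPt 1 σ₀ f (y₀ + σ₀ • u) y) (hy₁ : IsProxPt 1 σ f (y + σ • v) y₁)
    (hf : ERealConvexOn f) (hσ₀ : 0 < σ₀) (hσ : 0 < σ) (hθ : θ = σ / σ₀)
    (hybar : ybar = y + θ • (y - y₀)) {F₀ F F₁ Fhat : ℝ} (hF₀ : f y₀ = F₀) (hF : f y = F)
    (hF₁ : f y₁ = F₁) (hFhat : f yhat = Fhat) :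
    σ * ((1 + θ) * F - θ * F₀ - Fhat)
      ≤ 1 / 2 * (‖y - yhat‖ ^ 2 - ‖yhat - y₁‖ ^ 2 - ‖y₁ - ybar‖ ^ 2 - ‖ybar - y‖ ^ 2)
        + σ * (⟪y₁ - yhat, v⟫ + ⟪ybar - y₁, u⟫) := by
  have hone : ((1 : E →L[ℝ] E) : E →ₗ[ℝ] E).IsSymmetric := fun _ _ => rfl
  have hB := hy₁.mul_sub_le_inner hone hσ hf hF₁ hFhat
  have hC₁ := hy.mul_sub_le_inner hone hσ₀ hf hF hF₁
  have hC₀ := hy.mul_sub_le_inner hone hσ₀ hf hF hF₀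
  simp only [one_apply_eq_self] at hB hC₁ hC₀
  have hθpos : 0 < θ := hθ ▸ div_pos hσ hσ₀
  obtain rfl : σ = θ * σ₀ := by rw [hθ, div_mul_cancel₀ _ hσ₀.ne']
  subst hybar
  have hB' : ⟪yhat - y₁, y₁ - (y + (θ * σ₀) • v)⟫
      = ⟪yhat - y₁, y₁ - y⟫ + θ * σ₀ * ⟪y₁ - yhat, v⟫ := by
    simp only [inner_sub_left, inner_sub_right, inner_add_right, real_inner_smul_right]
    ring
  -- weighting the two tests of `y` by `θ` and `θ²` produces `ybar - y = θ • (y - y₀)`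
  have hC : θ * ⟪y₁ - y, y - (y₀ + σ₀ • u)⟫ + θ ^ 2 * ⟪y₀ - y, y - (y₀ + σ₀ • u)⟫
      = ⟪y₁ - (y + θ • (y - y₀)), y + θ • (y - y₀) - y⟫
        + θ * σ₀ * ⟪y + θ • (y - y₀) - y₁, u⟫ := by
    rw [show y - (y₀ + σ₀ • u) = (y - y₀) - σ₀ • u by abel, show y₀ - y = -(y - y₀) by abel,
      show y₁ - (y + θ • (y - y₀)) = (y₁ - y) - θ • (y - y₀) by abel,
      show y + θ • (y - y₀) - y₁ = θ • (y - y₀) - (y₁ - y) by abel, add_sub_cancel_left]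
    simp only [inner_sub_left, inner_sub_right, inner_neg_left, real_inner_smul_left,
      real_inner_smul_right]
    ring
  have h₁ := two_mul_inner_sub_sub yhat y₁ y
  have h₂ := two_mul_inner_sub_sub y₁ (y + θ • (y - y₀)) y
  rw [norm_sub_rev yhat y] at h₁
  linarith [mul_le_mul_of_nonneg_left hC₁ hθpos.le, mul_le_mul_of_nonneg_left hC₀ (sq_nonneg θ)]

end IsProxPt

theorem EReal.exists_eq_coe {x : EReal} (hx : x ≠ ⊤) (hx' : x ≠ ⊥) : ∃ r : ℝ, x = r :=
  ⟨x.toReal, (EReal.coe_toReal hx hx').symm⟩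

namespace IsSaddlePoint

variable {X Y : Type*} [NormedAddCommGroup X] [InnerProductSpace ℝ X] [NormedAddCommGroup Y]
  [InnerProductSpace ℝ Y] {K : X →L[ℝ] Y} {g : X → EReal} {h : X → ℝ} {fs : Y → EReal} {xh : X}
  {yh : Y}

theorem dual_ne_top (hs : IsSaddlePoint K g h fs xh yh) (hg : g xh ≠ ⊥) {w : Y} (hw : fs w ≠ ⊤)
    (hw' : fs w ≠ ⊥) : fs yh ≠ ⊤ := by
  intro htop
  obtain ⟨F, hF⟩ := EReal.exists_eq_coe hw hw'
  have hle := (hs xh w).1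
  simp [saddleVal, htop, hF, sub_eq_add_neg, EReal.add_eq_bot_iff, hg] at hle

theorem primal_ne_top (hs : IsSaddlePoint K g h fs xh yh) (hf : fs yh ≠ ⊤) (hf' : fs yh ≠ ⊥)
    {z : X} (hz : g z ≠ ⊤) (hz' : g z ≠ ⊥) : g xh ≠ ⊤ := by
  intro htop
  obtain ⟨F, hF⟩ := EReal.exists_eq_coe hf hf'
  obtain ⟨G, hG⟩ := EReal.exists_eq_coe hz hz'
  have hle := (hs z yh).2
  simp only [saddleVal, htop, hF, hG, EReal.coe_add_top, EReal.top_add_coe, EReal.top_sub_coe,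
    top_le_iff] at hle
  exact EReal.coe_ne_top _ (by exact_mod_cast hle)

end IsSaddlePoint

theorem one_iteration_descent_inequality_general
    {X Y : Type*} [NormedAddCommGroup X] [InnerProductSpace ℝ X] [FiniteDimensional ℝ X]
    [NormedAddCommGroup Y] [InnerProductSpace ℝ Y] [FiniteDimensional ℝ Y]
    (K : X →L[ℝ] Y)
    (g : X → EReal)
    (hgbot : ∀ z : X, g z ≠ ⊥) (hgtop : ∃ z : X, g z ≠ ⊤)
    (hgconv : ERealConvexOn g)
    (fs : Y → EReal)
    (hfbot : ∀ z : Y, fs z ≠ ⊥) (hftop : ∃ z : Y, fs z ≠ ⊤)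
    (hfconv : ERealConvexOn fs)
    (h : X → ℝ) (h' : X → X) (L : ℝ)
    (hhconv : ConvexOn ℝ Set.univ h)
    (hgrad : ∀ z : X, HasGradientAt h (h' z) z)
    (β δ : ℝ) (hβ : 0 < β)
    (Mk Mkinv : X →L[ℝ] X)
    (hMsa : ∀ u v : X, ⟪Mk u, v⟫ = ⟪u, Mk v⟫)
    (hMinv1 : Mk.comp Mkinv = ContinuousLinearMap.id ℝ X)
    (σkm1 σk θk τk : ℝ) (hσkm1 : 0 < σkm1) (hσk : 0 < σk)
    (hθk : θk = σk / σkm1) (hτk : τk = β * σk)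
    (xk xk1 : X) (ykm1 yk ybk yk1 : Y)
    (hy : IsProxPt (1 : Y →L[ℝ] Y) σkm1 fs (ykm1 + σkm1 • K xk) yk)
    (hybk : ybk = yk + θk • (yk - ykm1))
    (hx : IsProxPt Mk τk g
      (xk - τk • Mkinv ((ContinuousLinearMap.adjoint K) ybk) - τk • Mkinv (h' xk)) xk1)
    (hy1 : IsProxPt (1 : Y →L[ℝ] Y) σk fs (yk + σk • K xk1) yk1)
    (hls : τk * σk * ‖K xk1 - K xk‖ ^ 2
        + 2 * τk * (h xk1 - h xk - ⟪h' xk, xk1 - xk⟫)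
        ≤ δ * ⟪Mk (xk1 - xk), xk1 - xk⟫)
    (xh : X) (yh : Y)
    (hsaddle : IsSaddlePoint K g h fs xh yh) :
    (σk : EReal) * (Pgap K g h xh yh xk1 + ((1 + θk : ℝ) : EReal) * Dgap K fs xh yh yk)
        + ((1 / 2 * ‖yh - yk1‖ ^ 2 + 1 / (2 * β) * ⟪Mk (xh - xk1), xh - xk1⟫ : ℝ) : EReal)
      ≤ ((1 / 2 * ‖yk - yh‖ ^ 2 + 1 / (2 * β) * ⟪Mk (xk - xh), xk - xh⟫
            - (1 - δ) / (2 * β) * ⟪Mk (xk1 - xk), xk1 - xk⟫ : ℝ) : EReal)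
        + ((σk * θk : ℝ) : EReal) * Dgap K fs xh yh ykm1
        - ((1 / 2 * ‖ybk - yk‖ ^ 2 : ℝ) : EReal) := by
  obtain ⟨z₀, hz₀⟩ := hgtop
  obtain ⟨w₀, hw₀⟩ := hftop
  have hfyh : fs yh ≠ ⊤ := hsaddle.dual_ne_top (hgbot xh) hw₀ (hfbot w₀)
  obtain ⟨Fyh, hFyh⟩ := EReal.exists_eq_coe hfyh (hfbot yh)
  obtain ⟨Gxh, hGxh⟩ := EReal.exists_eq_coe
    (hsaddle.primal_ne_top hfyh (hfbot yh) hz₀ (hgbot z₀)) (hgbot xh)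
  obtain ⟨Gxk1, hGxk1⟩ := EReal.exists_eq_coe (hx.ne_top hz₀) (hgbot xk1)
  obtain ⟨Fyk, hFyk⟩ := EReal.exists_eq_coe (hy.ne_top hw₀) (hfbot yk)
  obtain ⟨Fyk1, hFyk1⟩ := EReal.exists_eq_coe (hy1.ne_top hw₀) (hfbot yk1)
  by_cases hkm : fs ykm1 = ⊤
  · have hD : Dgap K fs xh yh ykm1 = ⊤ := by simp [Dgap, hkm, hFyh]
    rw [hD, EReal.coe_mul_top_of_pos (mul_pos hσk (hθk ▸ div_pos hσk hσkm1)), EReal.coe_add_top,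
      EReal.top_sub_coe]
    exact le_top
  obtain ⟨Fykm1, hFykm1⟩ := EReal.exists_eq_coe hkm (hfbot ykm1)
  subst hτk
  have hP := hx.forward_backward_le hMsa hMinv1 hβ hσk hgconv hhconv (hgrad xk) hGxk1 hGxh
  have hD := hy.consecutive_steps_le hy1 hfconv hσkm1 hσk hθk hybk hFykm1 hFyk hFyk1 hFyh
  have hY := mul_inner_sub_half_norm_sq_le σk (yk1 - ybk) (K xk1 - K xk)
  have hlinesearch : σk * (h xk1 - h xk - ⟪h' xk, xk1 - xk⟫) + σk ^ 2 / 2 * ‖K xk1 - K xk‖ ^ 2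
      ≤ δ / (2 * β) * ⟪Mk (xk1 - xk), xk1 - xk⟫ := by
    rw [div_mul_eq_mul_div δ, le_div_iff₀ (by positivity)]
    linarith
  have hcoupling : ⟪(ContinuousLinearMap.adjoint K) yh, xk1 - xh⟫ - (1 + θk) * ⟪K xh, yk - yh⟫
      + θk * ⟪K xh, ykm1 - yh⟫ + ⟪(ContinuousLinearMap.adjoint K) ybk, xh - xk1⟫
      + ⟪yk1 - yh, K xk1⟫ + ⟪ybk - yk1, K xk⟫ = ⟪yk1 - ybk, K xk1 - K xk⟫ := by
    subst hybk
    simp only [ContinuousLinearMap.adjoint_inner_left, real_inner_comm (K xh),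
      inner_sub_left, inner_sub_right, inner_add_left, inner_add_right, real_inner_smul_left,
      real_inner_smul_right]
    ring
  simp only [Pgap, Dgap, hGxk1, hGxh, hFyk, hFyh, hFykm1]
  norm_cast
  rw [sub_div]
  linarith [congrArg (HMul.hMul σk) hcoupling]

/-- The key one-iteration descent inequality for Algorithm 1 with
constant ratio `β` and tolerance `δ ∈ (0,1]`. -/
theorem one_iteration_descent_inequality
    {X Y : Type*} [NormedAddCommGroup X] [InnerProductSpace ℝ X] [FiniteDimensional ℝ X]
    [NormedAddCommGroup Y] [InnerProductSpace ℝ Y] [FiniteDimensional ℝ Y]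
    (K : X →L[ℝ] Y)
    (g : X → EReal)
    (hgbot : ∀ z : X, g z ≠ ⊥) (hgtop : ∃ z : X, g z ≠ ⊤)
    (hglsc : LowerSemicontinuous g) (hgconv : ERealConvexOn g)
    (fs : Y → EReal)
    (hfbot : ∀ z : Y, fs z ≠ ⊥) (hftop : ∃ z : Y, fs z ≠ ⊤)
    (hflsc : LowerSemicontinuous fs) (hfconv : ERealConvexOn fs)
    (h : X → ℝ) (h' : X → X) (L : ℝ)
    (hhconv : ConvexOn ℝ Set.univ h)
    (hgrad : ∀ z : X, HasGradientAt h (h' z) z)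
    (hLip : ∀ u v : X, ‖h' u - h' v‖ ≤ L * ‖u - v‖)
    (α β δ : ℝ) (hα : 0 < α) (hβ : 0 < β) (hδ : δ ∈ Set.Ioc (0 : ℝ) 1)
    (Mk Mkinv : X →L[ℝ] X)
    (hMsa : ∀ u v : X, ⟪Mk u, v⟫ = ⟪u, Mk v⟫)
    (hMα : ∀ z : X, α * ‖z‖ ^ 2 ≤ ⟪Mk z, z⟫)
    (hMinv1 : Mk.comp Mkinv = ContinuousLinearMap.id ℝ X)
    (hMinv2 : Mkinv.comp Mk = ContinuousLinearMap.id ℝ X)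
    (σkm1 σk θk τk : ℝ) (hσkm1 : 0 < σkm1) (hσk : 0 < σk)
    (hθk : θk = σk / σkm1) (hτk : τk = β * σk)
    (xk xk1 : X) (ykm1 yk ybk yk1 : Y)
    (hy : IsProxPt (1 : Y →L[ℝ] Y) σkm1 fs (ykm1 + σkm1 • K xk) yk)
    (hybk : ybk = yk + θk • (yk - ykm1))
    (hx : IsProxPt Mk τk g
      (xk - τk • Mkinv ((ContinuousLinearMap.adjoint K) ybk) - τk • Mkinv (h' xk)) xk1)
    (hy1 : IsProxPt (1 : Y →L[ℝ] Y) σk fs (yk + σk • K xk1) yk1)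
    (hls : τk * σk * ‖K xk1 - K xk‖ ^ 2
        + 2 * τk * (h xk1 - h xk - ⟪h' xk, xk1 - xk⟫)
        ≤ δ * ⟪Mk (xk1 - xk), xk1 - xk⟫)
    (xh : X) (yh : Y)
    (hsaddle : IsSaddlePoint K g h fs xh yh) :
    (σk : EReal) * (Pgap K g h xh yh xk1 + ((1 + θk : ℝ) : EReal) * Dgap K fs xh yh yk)
        + ((1 / 2 * ‖yh - yk1‖ ^ 2 + 1 / (2 * β) * ⟪Mk (xh - xk1), xh - xk1⟫ : ℝ) : EReal)
      ≤ ((1 / 2 * ‖yk - yh‖ ^ 2 + 1 / (2 * β) * ⟪Mk (xk - xh), xk - xh⟫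
            - (1 - δ) / (2 * β) * ⟪Mk (xk1 - xk), xk1 - xk⟫ : ℝ) : EReal)
        + ((σk * θk : ℝ) : EReal) * Dgap K fs xh yh ykm1
        - ((1 / 2 * ‖ybk - yk‖ ^ 2 : ℝ) : EReal) :=
  one_iteration_descent_inequality_general K g hgbot hgtop hgconv fs hfbot hftop hfconv h h' L
    hhconv hgrad β δ hβ Mk Mkinv hMsa hMinv1 σkm1 σk θk τk hσkm1 hσk hθk hτk xk xk1 ykm1 yk ybk yk1
    hy hybk hx hy1 hls xh yh hsaddle
end

section
/- Let c > 0 and let (β_k)_{k≥1} be a sequence of positive real numbers satisfying β_{k+1} ≤ β_k / (1 + c√(β_k)) for all k. Then there exists a constant C_β > 0 such that β_k ≤ C_β / k² for all k ≥ 1. -/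
/-- Monotonicity of `x ↦ x/(1 + c√x)` on `[0, ∞)`. -/
lemma beta_decay_mono (c : ℝ) (hc : 0 < c) {x y : ℝ} (hx : 0 ≤ x) (hxy : x ≤ y) :
    x / (1 + c * Real.sqrt x) ≤ y / (1 + c * Real.sqrt y) := by
  have hy : 0 ≤ y := hx.trans hxy
  have hsx : (0:ℝ) ≤ Real.sqrt x := Real.sqrt_nonneg x
  have hsy : (0:ℝ) ≤ Real.sqrt y := Real.sqrt_nonneg y
  have hpx : 0 < 1 + c * Real.sqrt x := by positivity
  have hpy : 0 < 1 + c * Real.sqrt y := by positivity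
  rw [div_le_div_iff₀ hpx hpy]
  have hs : Real.sqrt x ≤ Real.sqrt y := Real.sqrt_le_sqrt hxy
  have h1 : x * Real.sqrt y ≤ y * Real.sqrt x := by
    have hx2 : Real.sqrt x ^ 2 = x := Real.sq_sqrt hx
    have hy2 : Real.sqrt y ^ 2 = y := Real.sq_sqrt hy
    nlinarith [mul_nonneg (mul_nonneg hsx hsy) (sub_nonneg.2 hs)]
  nlinarith

/-- If `β_{k+1} ≤ β_k/(1 + c√β_k)` for positive `β_k` and `c > 0`,
then `β_k = O(1/k²)`. -/
theorem beta_decay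
    (c : ℝ) (hc : 0 < c) (β : ℕ → ℝ)
    (hβpos : ∀ k, 1 ≤ k → 0 < β k)
    (hrec : ∀ k, 1 ≤ k → β (k + 1) ≤ β k / (1 + c * Real.sqrt (β k))) :
    ∃ Cβ : ℝ, 0 < Cβ ∧ ∀ k : ℕ, 1 ≤ k → β k ≤ Cβ / (k : ℝ) ^ 2 := by
  set C : ℝ := max (β 1) (9 / c ^ 2) with hCdef
  have hC9 : 9 / c ^ 2 ≤ C := le_max_right _ _
  have hCpos : 0 < C := lt_of_lt_of_le (by positivity) hC9
  have hcs : 3 ≤ c * Real.sqrt C := by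
    have h1 : Real.sqrt C ^ 2 = C := Real.sq_sqrt hCpos.le
    have h2 : (0:ℝ) ≤ Real.sqrt C := Real.sqrt_nonneg C
    have h3 : 9 ≤ C * c ^ 2 := (div_le_iff₀ (by positivity)).mp hC9
    have h4 : (c * Real.sqrt C) ^ 2 = C * c ^ 2 := by rw [mul_pow, h1]; ring
    nlinarith [h4, mul_nonneg hc.le h2]
  refine ⟨C, hCpos, ?_⟩
  intro k hk
  induction k, hk using Nat.le_induction with
  | base =>
    have h1 : ((1:ℕ):ℝ) ^ 2 = 1 := by norm_num
    rw [h1, div_one]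
    exact le_max_left _ _
  | succ k hk ih =>
    have hK : (1:ℝ) ≤ (k:ℝ) := by exact_mod_cast hk
    have hKpos : (0:ℝ) < (k:ℝ) := by linarith
    have hβk : 0 < β k := hβpos k hk
    have step1 : β (k + 1) ≤ β k / (1 + c * Real.sqrt (β k)) := hrec k hk
    have step2 : β k / (1 + c * Real.sqrt (β k)) ≤
        (C / (k:ℝ) ^ 2) / (1 + c * Real.sqrt (C / (k:ℝ) ^ 2)) :=
      beta_decay_mono c hc hβk.le (ih)
    have hsqrt : Real.sqrt (C / (k:ℝ) ^ 2) = Real.sqrt C / (k:ℝ) := by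
      rw [Real.sqrt_div hCpos.le, Real.sqrt_sq hKpos.le]
    have step3 : (C / (k:ℝ) ^ 2) / (1 + c * Real.sqrt (C / (k:ℝ) ^ 2)) ≤
        C / ((k:ℝ) + 1) ^ 2 := by
      rw [hsqrt, div_div]
      apply div_le_div_of_nonneg_left hCpos.le (by positivity)
      have hexp : (k:ℝ) ^ 2 * (1 + c * (Real.sqrt C / (k:ℝ)))
          = (k:ℝ) ^ 2 + c * Real.sqrt C * (k:ℝ) := by
        field_simp
      rw [hexp]
      nlinarith
    have : ((k:ℝ) + 1) = ((k + 1 : ℕ) : ℝ) := by push_cast; ring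
    calc β (k + 1) ≤ _ := step1
      _ ≤ _ := step2
      _ ≤ C / ((k:ℝ) + 1) ^ 2 := step3
      _ = C / ((k + 1 : ℕ) : ℝ) ^ 2 := by rw [this]
end

section
/- Let X be a finite-dimensional real inner product space, M a self-adjoint positive definite linear operator on X, τ > 0, b ∈ X, and g(x) := (1/2)‖x − b‖². Then for every u ∈ X: prox^M_{τg}(u) = (Id + τM^{−1})^{−1}( u + τM^{−1}b ), where Id + τM^{−1} is invertible. -/
open scoped RealInnerProductSpace

/-- For `g(x) = ½‖x − b‖²` and a self-adjoint positive definite `M`,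
the operator `Id + τM⁻¹` is invertible and
`prox^M_{τg}(u) = (Id + τM⁻¹)⁻¹(u + τM⁻¹b)`: that point is the unique minimizer of
`x ↦ ½‖x − b‖² + (1/(2τ))‖x − u‖²_M`. -/
theorem prox_quadratic
    {X : Type*} [NormedAddCommGroup X] [InnerProductSpace ℝ X] [FiniteDimensional ℝ X]
    (M Minv : X →L[ℝ] X)
    (hMsa : ∀ u v : X, ⟪M u, v⟫ = ⟪u, M v⟫)
    (hMpd : ∀ z : X, z ≠ 0 → 0 < ⟪M z, z⟫)
    (hMinv1 : M.comp Minv = ContinuousLinearMap.id ℝ X)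
    (hMinv2 : Minv.comp M = ContinuousLinearMap.id ℝ X)
    (τ : ℝ) (hτ : 0 < τ) (b u : X) :
    ∃ Tinv : X →L[ℝ] X,
      (ContinuousLinearMap.id ℝ X + τ • Minv).comp Tinv = ContinuousLinearMap.id ℝ X ∧
      Tinv.comp (ContinuousLinearMap.id ℝ X + τ • Minv) = ContinuousLinearMap.id ℝ X ∧
      (∀ z : X,
          1 / 2 * ‖Tinv (u + τ • Minv b) - b‖ ^ 2
              + 1 / (2 * τ) * ⟪M (Tinv (u + τ • Minv b) - u), Tinv (u + τ • Minv b) - u⟫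
            ≤ 1 / 2 * ‖z - b‖ ^ 2 + 1 / (2 * τ) * ⟪M (z - u), z - u⟫) ∧
      ∀ q : X,
        (∀ z : X,
          1 / 2 * ‖q - b‖ ^ 2 + 1 / (2 * τ) * ⟪M (q - u), q - u⟫
            ≤ 1 / 2 * ‖z - b‖ ^ 2 + 1 / (2 * τ) * ⟪M (z - u), z - u⟫) →
        q = Tinv (u + τ • Minv b) := by
  classical
  set T : X →L[ℝ] X := ContinuousLinearMap.id ℝ X + τ • Minv with hT
  have hMMinv : ∀ w, M (Minv w) = w := fun w => by
    have := ContinuousLinearMap.ext_iff.mp hMinv1 w; simpa using this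
  have hMinv_pos : ∀ z : X, z ≠ 0 → 0 < ⟪Minv z, z⟫ := by
    intro z hz
    have hw : Minv z ≠ 0 := fun h => hz (by rw [← hMMinv z, h, map_zero])
    have h := hMpd (Minv z) hw
    rw [hMMinv] at h
    calc (0:ℝ) < ⟪z, Minv z⟫ := h
    _ = ⟪Minv z, z⟫ := real_inner_comm _ _
  have hTapp : ∀ z, T z = z + τ • Minv z := by
    intro z; simp [hT]
  have hTinj : Function.Injective T := by
    intro z1 z2 h
    by_contra hne
    have hz0 : z1 - z2 ≠ 0 := sub_ne_zero.mpr hne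
    have hTz : T (z1 - z2) = 0 := by rw [map_sub, h, sub_self]
    have h1 : ⟪T (z1 - z2), z1 - z2⟫ = ‖z1 - z2‖ ^ 2 + τ * ⟪Minv (z1 - z2), z1 - z2⟫ := by
      rw [hTapp, inner_add_left, real_inner_smul_left, real_inner_self_eq_norm_sq]
    rw [hTz, inner_zero_left] at h1
    have h2 : 0 < ‖z1 - z2‖ ^ 2 := by have := norm_pos_iff.mpr hz0; positivity
    have h3 := hMinv_pos _ hz0
    nlinarith
  have hTsurj : Function.Surjective T :=
    (LinearMap.injective_iff_surjective (f := (T : X →ₗ[ℝ] X))).mp hTinj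
  let e : X ≃ₗ[ℝ] X := LinearEquiv.ofBijective (T : X →ₗ[ℝ] X) ⟨hTinj, hTsurj⟩
  let ec : X ≃L[ℝ] X := e.toContinuousLinearEquiv
  have hec : ∀ z, ec z = T z := fun z => rfl
  refine ⟨ec.symm.toContinuousLinearMap, ?_, ?_, ?_, ?_⟩
  · ext z
    have : T (ec.symm z) = ec (ec.symm z) := (hec _).symm
    simpa [this] using ec.apply_symm_apply z
  · ext z
    have : T z = ec z := (hec z).symm
    simpa [this] using ec.symm_apply_apply z
  all_goals {
    set x : X := ec.symm.toContinuousLinearMap (u + τ • Minv b) with hxdef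
    have hx : T x = u + τ • Minv b := by
      have : x = ec.symm (u + τ • Minv b) := rfl
      rw [this, ← hec, ec.apply_symm_apply]
    have hstat : M (x - u) = τ • (b - x) := by
      have h1 : x + τ • Minv x = u + τ • Minv b := by rw [← hTapp, hx]
      have h2 : τ • Minv (b - x) = x - u := by
        rw [map_sub, smul_sub]
        have : τ • Minv b = u + τ • Minv b - u := by abel
        rw [this]
        rw [← h1]; abel
      calc M (x - u) = M (τ • Minv (b - x)) := by rw [h2]
        _ = τ • (b - x) := by rw [map_smul, hMMinv]
    have hkey : ∀ z : X,
        1 / 2 * ‖z - b‖ ^ 2 + 1 / (2 * τ) * ⟪M (z - u), z - u⟫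
          = (1 / 2 * ‖x - b‖ ^ 2 + 1 / (2 * τ) * ⟪M (x - u), x - u⟫)
            + (1 / 2 * ‖z - x‖ ^ 2 + 1 / (2 * τ) * ⟪M (z - x), z - x⟫) := by
      intro z
      have hzb : z - b = (x - b) + (z - x) := by abel
      have hzu : z - u = (x - u) + (z - x) := by abel
      rw [hzb, hzu, norm_add_sq_real]
      have hMexp : ⟪M ((x - u) + (z - x)), (x - u) + (z - x)⟫
          = ⟪M (x - u), x - u⟫ + 2 * ⟪M (x - u), z - x⟫ + ⟪M (z - x), z - x⟫ := by
        rw [map_add, inner_add_left, inner_add_right, inner_add_right]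
        have hsym : ⟪M (z - x), x - u⟫ = ⟪M (x - u), z - x⟫ := by
          rw [hMsa]; exact real_inner_comm _ _
        rw [hsym]; ring
      rw [hMexp]
      have hlin : ⟪M (x - u), z - x⟫ = τ * ⟪b - x, z - x⟫ := by
        rw [hstat, real_inner_smul_left]
      have hneg : ⟪b - x, z - x⟫ = -⟪x - b, z - x⟫ := by
        rw [← inner_neg_left]; congr 1; abel
      rw [hlin, hneg]
      field_simp
      ring
    have hMnn : ∀ d : X, 0 ≤ ⟪M d, d⟫ := by
      intro d
      rcases eq_or_ne d 0 with h | h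
      · simp [h]
      · exact (hMpd d h).le
    have hnn : ∀ z : X, 0 ≤ 1 / 2 * ‖z - x‖ ^ 2 + 1 / (2 * τ) * ⟪M (z - x), z - x⟫ := by
      intro z
      have h1 := hMnn (z - x)
      have h2 : (0:ℝ) ≤ ‖z - x‖ ^ 2 := by positivity
      have : 0 < 1 / (2 * τ) := by positivity
      nlinarith
    first
    | · intro z
        rw [hkey z]
        have := hnn z
        linarith
    | · intro q hq
        have h1 := hq x
        rw [hkey q] at h1
        by_contra hne
        have hq0 : q - x ≠ 0 := sub_ne_zero.mpr hne
        have h2 : 0 < ‖q - x‖ ^ 2 := by have := norm_pos_iff.mpr hq0; positivity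
        have h3 := hMnn (q - x)
        have : 0 < 1 / (2 * τ) := by positivity
        nlinarith
  }
end
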